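/- arXiv:0802.4308 — 7 statements merged into one kernel-verified Lean document; each statement's English description precedes it below -/
import Mathlib

section
/- Let F ⊆ E be fields, let σ : E → E be a ring automorphism with σ ∘ σ = id which fixes F pointwise, and let ℓ : E → F be a nonzero F-linear map with ℓ(σ(z)) = ℓ(z) for all z ∈ E. Let V be an E-vector space and ĥ : V × V → E a map which is additive in each variable and E-linear in the first variable, and set h(v,w) = ℓ(ĥ(v,w)). Assume h(w,v) = −h(v,w) for all v,w ∈ V and h(a•v, w) = h(v, σ(a)•w) for all a ∈ E and v,w ∈ V. Then ĥ(w,v) = −σ(ĥ(v,w)) for all v,w ∈ V; moreover, if h is nondegenerate (h(v,w) = 0 for all w implies v = 0), then ĥ is nondegenerate. -/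
/-! Since `ℓ` is a nonzero `F`-linear form on the field `E`, an element `z` with `ℓ (a * z) = 0`
for all `a` vanishes. Applying this to `z = ĥ(w,v) + σ(ĥ(v,w))` reduces anti-hermitianity to the
identity `ℓ (a * ĥ(w,v)) = -ℓ (a * σ(ĥ(v,w)))`, which follows from the alternating property of `h`,
the adjointness of `σ` and the `σ`-invariance of `ℓ`. -/

theorem LinearMap.eq_zero_of_forall_map_mul_eq_zero {F E : Type*} [CommSemiring F]
    [DivisionRing E] [Algebra F E] {ℓ : E →ₗ[F] F} (hℓ : ℓ ≠ 0) {z : E}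
    (hz : ∀ a : E, ℓ (a * z) = 0) : z = 0 := by
  by_contra hz0
  refine hℓ (LinearMap.ext fun b => ?_)
  simpa [mul_assoc, inv_mul_cancel₀ hz0] using hz (b * z⁻¹)

section AntiHermitian

variable {F E V : Type*} [Field F] [Field E] [Algebra F E] [AddCommGroup V] [Module E V]
  {σ : E →+* E} {ℓ : E →ₗ[F] F}

theorem map_ringHom_mul_eq_map_mul_ringHom (hσ : Function.Involutive σ)
    (hℓσ : ∀ z : E, ℓ (σ z) = ℓ z) (a z : E) : ℓ (σ a * z) = ℓ (a * σ z) := by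
  rw [← hℓσ (σ a * z), map_mul, hσ]

theorem map_mul_form_swap_eq_neg_map_mul_ringHom (hσ : Function.Involutive σ)
    (hℓσ : ∀ z : E, ℓ (σ z) = ℓ z)
    {bh : V → V → E} (hsmul : ∀ (a : E) (v w : V), bh (a • v) w = a * bh v w)
    (halt : ∀ v w : V, ℓ (bh w v) = - ℓ (bh v w))
    (hadj : ∀ (a : E) (v w : V), ℓ (bh (a • v) w) = ℓ (bh v (σ a • w))) (a : E) (v w : V) :
    ℓ (a * bh w v) = - ℓ (a * σ (bh v w)) := by
  have hadj' := hadj (σ a) v w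
  rw [hσ] at hadj'
  rw [← map_ringHom_mul_eq_map_mul_ringHom hσ hℓσ, ← hsmul, halt, ← hadj', hsmul]

theorem form_swap_eq_neg_ringHom (hσ : Function.Involutive σ) (hℓ : ℓ ≠ 0)
    (hℓσ : ∀ z : E, ℓ (σ z) = ℓ z) {bh : V → V → E}
    (hsmul : ∀ (a : E) (v w : V), bh (a • v) w = a * bh v w)
    (halt : ∀ v w : V, ℓ (bh w v) = - ℓ (bh v w))
    (hadj : ∀ (a : E) (v w : V), ℓ (bh (a • v) w) = ℓ (bh v (σ a • w))) (v w : V) :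
    bh w v = - σ (bh v w) := by
  refine eq_neg_of_add_eq_zero_left (ℓ.eq_zero_of_forall_map_mul_eq_zero hℓ fun a => ?_)
  rw [mul_add, map_add, map_mul_form_swap_eq_neg_map_mul_ringHom hσ hℓσ hsmul halt hadj,
    neg_add_cancel]

end AntiHermitian

theorem stmt_0_general {F E V : Type*} [Field F] [Field E] [Algebra F E]
    [AddCommGroup V] [Module E V]
    (σ : E →+* E) (hσ2 : ∀ z : E, σ (σ z) = z)
    (ℓ : E →ₗ[F] F) (hℓ : ℓ ≠ 0)
    (hℓσ : ∀ z : E, ℓ (σ z) = ℓ z)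
    (bh : V → V → E)
    (hsmul : ∀ (a : E) (v w : V), bh (a • v) w = a * bh v w)
    (halt : ∀ v w : V, ℓ (bh w v) = - ℓ (bh v w))
    (hadj : ∀ (a : E) (v w : V), ℓ (bh (a • v) w) = ℓ (bh v (σ a • w))) :
    (∀ v w : V, bh w v = - σ (bh v w)) ∧
    ((∀ v : V, (∀ w : V, ℓ (bh v w) = 0) → v = 0) →
      (∀ v : V, (∀ w : V, bh v w = 0) → v = 0)) :=
  ⟨form_swap_eq_neg_ringHom hσ2 hℓ hℓσ hsmul halt hadj,
    fun hnd v hv => hnd v fun w => by rw [hv w, map_zero]⟩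

/-- Proposition 1.3.1 (first assertion): the E-valued form `bh` lifting the
nondegenerate alternating form `h = ℓ ∘ bh` is a nondegenerate σ-anti-hermitian form. -/
theorem stmt_0 {F E V : Type*} [Field F] [Field E] [Algebra F E]
    [AddCommGroup V] [Module E V]
    (σ : E →+* E) (hσ2 : ∀ z : E, σ (σ z) = z)
    (hσF : ∀ a : F, σ (algebraMap F E a) = algebraMap F E a)
    (ℓ : E →ₗ[F] F) (hℓ : ℓ ≠ 0)
    (hℓσ : ∀ z : E, ℓ (σ z) = ℓ z)
    (bh : V → V → E)
    (haddl : ∀ v v' w : V, bh (v + v') w = bh v w + bh v' w)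
    (haddr : ∀ v w w' : V, bh v (w + w') = bh v w + bh v w')
    (hsmul : ∀ (a : E) (v w : V), bh (a • v) w = a * bh v w)
    (halt : ∀ v w : V, ℓ (bh w v) = - ℓ (bh v w))
    (hadj : ∀ (a : E) (v w : V), ℓ (bh (a • v) w) = ℓ (bh v (σ a • w))) :
    (∀ v w : V, bh w v = - σ (bh v w)) ∧
    ((∀ v : V, (∀ w : V, ℓ (bh v w) = 0) → v = 0) →
      (∀ v : V, (∀ w : V, bh v w = 0) → v = 0)) :=
  stmt_0_general σ hσ2 ℓ hℓ hℓσ bh hsmul halt hadj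
end

section
/- Let F ⊆ E be fields and ℓ : E → F a nonzero F-linear map. Let V be an E-vector space and ĥ : V × V → E a map which is additive in each variable and E-linear in the first variable, and set h(v,w) = ℓ(ĥ(v,w)). Then for every E-linear map g : V → V, one has h(g v, g w) = h(v,w) for all v,w ∈ V if and only if ĥ(g v, g w) = ĥ(v,w) for all v,w ∈ V. -/
/- If `ĥ(g v, g w) - ĥ(v, w) = d ≠ 0`, scaling `v` by `a ∈ E` gives `ℓ(a d) = 0` for every `a`;
since `a ↦ a d` is onto, `ℓ` would vanish identically. -/

theorem LinearMap.eq_zero_of_forall_map_mul_eq_zero_s1 {R E M : Type*} [Semiring R]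
    [DivisionRing E] [Module R E] [AddCommMonoid M] [Module R M]
    {ℓ : E →ₗ[R] M} (hℓ : ℓ ≠ 0) {d : E} (h : ∀ a : E, ℓ (a * d) = 0) : d = 0 := by
  by_contra hd
  refine hℓ (LinearMap.ext fun e => ?_)
  simpa [inv_mul_cancel_right₀ hd] using h (e * d⁻¹)

theorem stmt_1_general {F E V : Type*} [Field F] [Field E] [Algebra F E]
    [AddCommGroup V] [Module E V]
    (ℓ : E →ₗ[F] F) (hℓ : ℓ ≠ 0)
    (bh : V → V → E)
    (hsmul : ∀ (a : E) (v w : V), bh (a • v) w = a * bh v w)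
    (g : V →ₗ[E] V) :
    (∀ v w : V, ℓ (bh (g v) (g w)) = ℓ (bh v w)) ↔
      (∀ v w : V, bh (g v) (g w) = bh v w) := by
  refine ⟨fun H v w => sub_eq_zero.mp ?_, fun H v w => by rw [H]⟩
  refine LinearMap.eq_zero_of_forall_map_mul_eq_zero_s1 hℓ fun a => ?_
  have h := H (a • v) w
  rw [map_smul, hsmul, hsmul] at h
  rw [mul_sub, map_sub, h, sub_self]

/-- Proposition 1.3.1 (second assertion): an E-linear map preserves
`h = ℓ ∘ bh` if and only if it preserves `bh`. -/
theorem stmt_1 {F E V : Type*} [Field F] [Field E] [Algebra F E]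
    [AddCommGroup V] [Module E V]
    (ℓ : E →ₗ[F] F) (hℓ : ℓ ≠ 0)
    (bh : V → V → E)
    (haddl : ∀ v v' w : V, bh (v + v') w = bh v w + bh v' w)
    (haddr : ∀ v w w' : V, bh v (w + w') = bh v w + bh v w')
    (hsmul : ∀ (a : E) (v w : V), bh (a • v) w = a * bh v w)
    (g : V →ₗ[E] V) :
    (∀ v w : V, ℓ (bh (g v) (g w)) = ℓ (bh v w)) ↔
      (∀ v w : V, bh (g v) (g w) = bh v w) :=
  stmt_1_general ℓ hℓ bh hsmul g
end

section
/- Let F ⊆ E be fields, 𝔬_F a subring of F, 𝔬_E a subring of E, and c ∈ E a nonzero element. Let ℓ : E → F be an F-linear map such that {z ∈ E : ℓ(z) ∈ 𝔬_F} = c • 𝔬_E (the set of elements c·t with t ∈ 𝔬_E). Let V be an E-vector space, ĥ : V × V → E additive in each variable and E-linear in the first variable, and for a subset L ⊆ V define L^# = {v ∈ V : ℓ(ĥ(v,l)) ∈ 𝔬_F for all l ∈ L} and L^♮ = {v ∈ V : ĥ(v,l) ∈ 𝔬_E for all l ∈ L}. Then L^# = c • L^♮. -/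
open Pointwise

/-! The hypothesis on `ℓ` says that `ℓ z ∈ 𝔬_F` exactly when `z ∈ c • 𝔬_E`, so `L^#` is the set of `v`
with all `ĥ(v, l) ∈ c • 𝔬_E`. Since `ĥ(c⁻¹ • v, l) = c⁻¹ * ĥ(v, l)`, this says `c⁻¹ • v ∈ L^♮`. -/

/-- For `S = 𝔬_E` this is `L^♮`, for `S = ℓ⁻¹(𝔬_F)` it is `L^#`. -/
def pairingDual {V W R : Type*} (b : V → W → R) (L : Set W) (S : Set R) : Set V :=
  {v | ∀ l ∈ L, b v l ∈ S}

theorem pairingDual_smul_set {G V W R : Type*} [GroupWithZero G] [MulAction G V] [MulAction G R]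
    (b : V → W → R) (hb : ∀ (a : G) (v : V) (w : W), b (a • v) w = a • b v w)
    (L : Set W) (S : Set R) {c : G} (hc : c ≠ 0) :
    pairingDual b L (c • S) = c • pairingDual b L S := by
  ext v
  simp only [Set.mem_smul_set_iff_inv_smul_mem₀ hc, pairingDual, Set.mem_ofPred_eq, hb]

theorem stmt_2_general {F E V : Type*} [Field F] [Field E] [Algebra F E]
    [AddCommGroup V] [Module E V]
    (oF : Subring F) (oE : Subring E)
    (c : E) (hc : c ≠ 0)
    (ℓ : E →ₗ[F] F)
    (hℓ : {z : E | ℓ z ∈ oF} = c • (oE : Set E))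
    (bh : V → V → E)
    (hsmul : ∀ (a : E) (v w : V), bh (a • v) w = a * bh v w)
    (L : Set V) :
    {v : V | ∀ l ∈ L, ℓ (bh v l) ∈ oF} = c • {v : V | ∀ l ∈ L, bh v l ∈ oE} := by
  change pairingDual bh L {z : E | ℓ z ∈ oF} = c • pairingDual bh L oE
  rw [hℓ]
  exact pairingDual_smul_set bh hsmul L oE hc

/-- Proposition 1.4.1: if `ℓ⁻¹(𝔬_F) = c • 𝔬_E`, then the `𝔬_F`-dual of `L` with
respect to `h = ℓ ∘ bh` equals `c` times the `𝔬_E`-dual of `L` with respect to `bh`. -/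
theorem stmt_2 {F E V : Type*} [Field F] [Field E] [Algebra F E]
    [AddCommGroup V] [Module E V]
    (oF : Subring F) (oE : Subring E)
    (c : E) (hc : c ≠ 0)
    (ℓ : E →ₗ[F] F)
    (hℓ : {z : E | ℓ z ∈ oF} = c • (oE : Set E))
    (bh : V → V → E)
    (haddl : ∀ v v' w : V, bh (v + v') w = bh v w + bh v' w)
    (haddr : ∀ v w w' : V, bh v (w + w') = bh v w + bh v w')
    (hsmul : ∀ (a : E) (v w : V), bh (a • v) w = a * bh v w)
    (L : Set V) :
    {v : V | ∀ l ∈ L, ℓ (bh v l) ∈ oF} = c • {v : V | ∀ l ∈ L, bh v l ∈ oE} :=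
  stmt_2_general oF oE c hc ℓ hℓ bh hsmul L
end

section
/- Let F ⊆ E be fields, 𝔬_F a subring of F, 𝔬_E a subring of E, σ : E → E a ring automorphism with σ ∘ σ = id, and ϖ ∈ 𝔬_E a nonzero element with σ(ϖ) = ϖ which is invertible in E. Let ℓ : E → F be an F-linear map such that {z ∈ E : ℓ(z) ∈ 𝔬_F} = ϖ⁻¹ • 𝔬_E. Let V be an E-vector space and ĥ : V × V → E additive in each variable, E-linear in the first variable and σ-semilinear in the second variable (ĥ(v, a•w) = σ(a)·ĥ(v,w)). For a subset L ⊆ V define L^# = {v ∈ V : ℓ(ĥ(v,l)) ∈ 𝔬_F for all l ∈ L} and L^♮ = {v ∈ V : ĥ(v,l) ∈ 𝔬_E for all l ∈ L}. If L is an 𝔬_E-submodule of V with ϖ • L^♮ = L, then the set M = ϖ⁻¹ • L satisfies M^# = M. -/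
/-!
`M^#` is computed by moving the scalar `ϖ⁻¹` of `M = ϖ⁻¹ • L` out of `ĥ`: since `σ ϖ = ϖ`,
`ℓ (ĥ v (ϖ⁻¹ • l)) ∈ 𝔬_F` says `ϖ⁻¹ * ĥ v l ∈ ϖ⁻¹ • 𝔬_E`, i.e. `ĥ v l ∈ 𝔬_E`. Hence `M^# = L^♮`,
and `L^♮ = ϖ⁻¹ • L` by the hypothesis `ϖ • L^♮ = L`.
-/

open Pointwise

lemma setOf_forall_mem_smul_set {E V : Type*} [NonAssocSemiring E] [SMul E V]
    (σ : E →+* E) (bh : V → V → E) (hsemi : ∀ (a : E) (v w : V), bh v (a • w) = σ a * bh v w)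
    (S : Set E) (c : E) (L : Set V) :
    {v : V | ∀ l ∈ c • L, bh v l ∈ S} = {v : V | ∀ l ∈ L, σ c * bh v l ∈ S} := by
  ext v
  simp only [Set.mem_ofPred_eq, ← Set.image_smul, Set.forall_mem_image, hsemi]

lemma setOf_forall_mul_mem_smul_set {E V : Type*} [GroupWithZero E] (bh : V → V → E)
    (S : Set E) {c : E} (hc : c ≠ 0) (L : Set V) :
    {v : V | ∀ l ∈ L, c * bh v l ∈ c • S} = {v : V | ∀ l ∈ L, bh v l ∈ S} := by
  simp only [← smul_eq_mul, Set.smul_mem_smul_set_iff₀ hc]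

theorem stmt_3_general {F E V : Type*} [Field F] [Field E] [Algebra F E]
    [AddCommGroup V] [Module E V]
    (oF : Subring F) (oE : Subring E)
    (σ : E →+* E)
    (ϖ : E) (hϖ0 : ϖ ≠ 0) (hσϖ : σ ϖ = ϖ)
    (ℓ : E →ₗ[F] F)
    (hℓ : {z : E | ℓ z ∈ oF} = ϖ⁻¹ • (oE : Set E))
    (bh : V → V → E)
    (hsemi : ∀ (a : E) (v w : V), bh v (a • w) = σ a * bh v w)
    (L : Set V)
    (hLdual : ϖ • {v : V | ∀ l ∈ L, bh v l ∈ oE} = L) :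
    {v : V | ∀ l ∈ ϖ⁻¹ • L, ℓ (bh v l) ∈ oF} = ϖ⁻¹ • L := by
  have hsharp : {v : V | ∀ l ∈ ϖ⁻¹ • L, ℓ (bh v l) ∈ oF} = {v : V | ∀ l ∈ L, bh v l ∈ oE} := by
    change {v : V | ∀ l ∈ ϖ⁻¹ • L, bh v l ∈ {z : E | ℓ z ∈ oF}} =
      {v : V | ∀ l ∈ L, bh v l ∈ (oE : Set E)}
    rw [hℓ, setOf_forall_mem_smul_set σ bh hsemi, map_inv₀, hσϖ,
      setOf_forall_mul_mem_smul_set bh _ (inv_ne_zero hϖ0)]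
  rw [hsharp, (inv_smul_eq_iff₀ hϖ0).2 hLdual.symm]

/-- Proposition 1.4.2 (2): in the ramified case, where `ℓ⁻¹(𝔬_F) = ϖ⁻¹ • 𝔬_E`,
if `L` is an `𝔬_E`-submodule with `ϖ • L^♮ = L`, then `M = ϖ⁻¹ • L` satisfies `M^# = M`. -/
theorem stmt_3 {F E V : Type*} [Field F] [Field E] [Algebra F E]
    [AddCommGroup V] [Module E V]
    (oF : Subring F) (oE : Subring E)
    (σ : E →+* E) (hσ2 : ∀ z : E, σ (σ z) = z)
    (ϖ : E) (hϖE : ϖ ∈ oE) (hϖ0 : ϖ ≠ 0) (hσϖ : σ ϖ = ϖ)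
    (ℓ : E →ₗ[F] F)
    (hℓ : {z : E | ℓ z ∈ oF} = ϖ⁻¹ • (oE : Set E))
    (bh : V → V → E)
    (haddl : ∀ v v' w : V, bh (v + v') w = bh v w + bh v' w)
    (haddr : ∀ v w w' : V, bh v (w + w') = bh v w + bh v w')
    (hsmul : ∀ (a : E) (v w : V), bh (a • v) w = a * bh v w)
    (hsemi : ∀ (a : E) (v w : V), bh v (a • w) = σ a * bh v w)
    (L : Set V)
    (hL0 : (0 : V) ∈ L)
    (hLadd : ∀ v ∈ L, ∀ w ∈ L, v + w ∈ L)
    (hLsmul : ∀ a ∈ oE, ∀ v ∈ L, a • v ∈ L)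
    (hLdual : ϖ • {v : V | ∀ l ∈ L, bh v l ∈ oE} = L) :
    {v : V | ∀ l ∈ ϖ⁻¹ • L, ℓ (bh v l) ∈ oF} = ϖ⁻¹ • L :=
  stmt_3_general oF oE σ ϖ hϖ0 hσϖ ℓ hℓ bh hsemi L hLdual
end

section
/- Let G be a group and γ : G → G a group automorphism with γ ∘ γ = id. Let U and V be subgroups of G such that γ(U) = U and γ(V) = V (setwise), U normalizes V, and every element of U ∩ V has odd finite order. Then {g ∈ G : g = u·v for some u ∈ U, v ∈ V, and γ(g) = g} = {u·v : u ∈ U, v ∈ V, γ(u) = u, γ(v) = v}; in other words, (UV)^Γ = U^Γ·V^Γ, where X^Γ denotes the γ-fixed points of X. -/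
/-!
Write a fixed point as `u * v`. Then `t = u⁻¹ * γ u = v * (γ v)⁻¹` lies in `U ∩ V` and satisfies
`γ t = t⁻¹`, i.e. it is a 1-cocycle of `Γ = {1, γ}` with values in `U ∩ V`. Since `t` has odd
order it has a square root `s` among its own powers, so `γ s = s⁻¹` as well, and `t` is the
coboundary of `s`: moving `s` across the product gives the fixed factors `u * s` and `s⁻¹ * v`.
-/

theorem sq_pow_half_succ_of_pow_eq_one {M : Type*} [Monoid M] {t : M} {n : ℕ} (hn : Odd n)
    (ht : t ^ n = 1) : (t ^ (n / 2 + 1)) ^ 2 = t := by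
  obtain ⟨m, rfl⟩ := hn
  rw [← pow_mul, show ((2 * m + 1) / 2 + 1) * 2 = 2 * m + 1 + 1 by omega, pow_succ, ht, one_mul]

section Involution

variable {G : Type*} [Group G] (γ : G →* G)

theorem inv_mul_map_eq_mul_inv_map {u v : G} (h : γ (u * v) = u * v) :
    u⁻¹ * γ u = v * (γ v)⁻¹ := by
  rw [map_mul] at h
  rw [inv_mul_eq_iff_eq_mul, ← mul_assoc, eq_mul_inv_iff_mul_eq, h]

theorem map_inv_mul_map (hγ : Function.Involutive γ) (u : G) :
    γ (u⁻¹ * γ u) = (u⁻¹ * γ u)⁻¹ := by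
  rw [map_mul, map_inv, hγ u, mul_inv_rev, inv_inv]

theorem map_mul_eq_self_of_sq_eq_cocycle {u v s : G} (h : γ (u * v) = u * v)
    (hs : γ s = s⁻¹) (hst : s * s = u⁻¹ * γ u) :
    γ (u * s) = u * s ∧ γ (s⁻¹ * v) = s⁻¹ * v := by
  have hu : γ u = u * (s * s) := by rw [hst, mul_inv_cancel_left]
  have hv : γ v = (s * s)⁻¹ * v := by
    rw [hst, inv_mul_map_eq_mul_inv_map γ h]; group
  constructor
  · rw [map_mul, hs, hu]; group
  · rw [map_mul, map_inv, hs, hv]; group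

end Involution

theorem stmt_5_general {G : Type*} [Group G] (γ : G →* G) (hγ2 : ∀ g : G, γ (γ g) = g)
    (U V : Subgroup G)
    (hU : ∀ g : G, g ∈ U ↔ γ g ∈ U) (hV : ∀ g : G, g ∈ V ↔ γ g ∈ V)
    (hodd : ∀ g : G, g ∈ U → g ∈ V → ∃ n : ℕ, Odd n ∧ g ^ n = 1) :
    {g : G | (∃ u ∈ U, ∃ v ∈ V, g = u * v) ∧ γ g = g}
      = {g : G | ∃ u ∈ U, ∃ v ∈ V, γ u = u ∧ γ v = v ∧ g = u * v} := by
  ext g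
  constructor
  · rintro ⟨⟨u, hu, v, hv, rfl⟩, hfix⟩
    set t := u⁻¹ * γ u with ht
    have htU : t ∈ U := U.mul_mem (U.inv_mem hu) ((hU u).mp hu)
    have htV : t ∈ V := by
      rw [ht, inv_mul_map_eq_mul_inv_map γ hfix]
      exact V.mul_mem hv (V.inv_mem ((hV v).mp hv))
    obtain ⟨n, hn, htn⟩ := hodd t htU htV
    set s := t ^ (n / 2 + 1)
    have hs : γ s = s⁻¹ := by rw [map_pow, map_inv_mul_map γ hγ2, inv_pow]
    have hst : s * s = t := by rw [← sq, sq_pow_half_succ_of_pow_eq_one hn htn]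
    obtain ⟨hus, hsv⟩ := map_mul_eq_self_of_sq_eq_cocycle γ hfix hs hst
    exact ⟨u * s, U.mul_mem hu (U.pow_mem htU _), s⁻¹ * v,
      V.mul_mem (V.inv_mem (V.pow_mem htV _)) hv, hus, hsv, by group⟩
  · rintro ⟨u, hu, v, hv, hγu, hγv, rfl⟩
    exact ⟨⟨u, hu, v, hv, rfl⟩, by rw [map_mul, hγu, hγv]⟩

/-- Lemma 3.2.2: if `U` and `V` are `γ`-stable subgroups, `U` normalizes `V`,
and every element of `U ∩ V` has odd finite order, then `(UV)^Γ = U^Γ · V^Γ`. -/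
theorem stmt_5 {G : Type*} [Group G] (γ : G →* G) (hγ2 : ∀ g : G, γ (γ g) = g)
    (U V : Subgroup G)
    (hU : ∀ g : G, g ∈ U ↔ γ g ∈ U) (hV : ∀ g : G, g ∈ V ↔ γ g ∈ V)
    (hnorm : ∀ u ∈ U, ∀ v ∈ V, u * v * u⁻¹ ∈ V)
    (hodd : ∀ g : G, g ∈ U → g ∈ V → ∃ n : ℕ, Odd n ∧ g ^ n = 1) :
    {g : G | (∃ u ∈ U, ∃ v ∈ V, g = u * v) ∧ γ g = g}
      = {g : G | ∃ u ∈ U, ∃ v ∈ V, γ u = u ∧ γ v = v ∧ g = u * v} :=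
  stmt_5_general γ hγ2 U V hU hV hodd
end

section
/- Let q and f be natural numbers with q ≥ 2 and f odd, and let K be a finite field with exactly q^{2f} elements. Then there exists a group homomorphism θ : K^× → ℂ^× such that θ^{q^f + 1} is the trivial homomorphism, and for every integer i with 1 ≤ i ≤ f − 1 the homomorphism x ↦ θ(x^{q^{2i}}) is different from θ. -/
/-!
Let `m = q^f + 1`, which divides `q^{2f} - 1 = |K^×|`. Sending a generator of the cyclic group
`K^×` to a primitive `m`-th root of unity `ζ` gives a character `θ` with `θ^m = 1`, and
`θ(x^{q^{2i}}) = θ(x)` for all `x` would force `ζ^{q^{2i}} = ζ`, i.e. `q^{2i} ≡ 1 [MOD m]`.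
Since also `q^{2f} ≡ 1`, this gives `q^{2d} ≡ 1` for `d = gcd(i, f)`; but `f` is odd, so a proper
divisor `d` of `f` has `2d < f`, and then `1 < q^{2d} < m`.
-/

lemma Nat.two_mul_lt_of_dvd_of_lt_of_odd {d f : ℕ} (hdf : d ∣ f) (hlt : d < f) (hf : Odd f) :
    2 * d < f := by
  obtain ⟨k, rfl⟩ := hdf
  have hk : Odd k := (Nat.odd_mul.mp hf).2
  have hk1 : k ≠ 1 := by rintro rfl; simp at hlt
  have hk3 : 3 ≤ k := by obtain ⟨t, rfl⟩ := hk; omega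
  have hd : 0 < d := Nat.pos_of_ne_zero (by rintro rfl; simp at hlt)
  nlinarith

lemma Nat.pow_add_one_dvd_pow_two_mul_sub_one (q f : ℕ) : q ^ f + 1 ∣ q ^ (2 * f) - 1 := by
  rw [pow_mul', ← one_pow 2, Nat.sq_sub_sq]
  exact dvd_mul_right _ _

lemma Nat.not_pow_two_mul_modEq_one {q f i : ℕ} (hq : 2 ≤ q) (hf : Odd f) (hi : 0 < i)
    (hif : i < f) : ¬ q ^ (2 * i) ≡ 1 [MOD q ^ f + 1] := by
  intro h2i
  set m := q ^ f + 1
  set d := i.gcd f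
  have hcast (n : ℕ) : q ^ n ≡ 1 [MOD m] ↔ (q : ZMod m) ^ n = 1 := by
    rw [← ZMod.natCast_eq_natCast_iff, Nat.cast_pow, Nat.cast_one]
  have h2f : q ^ (2 * f) ≡ 1 [MOD m] :=
    ((Nat.modEq_iff_dvd' (Nat.one_le_pow _ _ (by omega))).mpr
      (pow_add_one_dvd_pow_two_mul_sub_one q f)).symm
  have h2d : q ^ (2 * d) ≡ 1 [MOD m] := by
    rw [hcast] at h2i h2f ⊢
    rw [← Nat.gcd_mul_left]
    exact pow_gcd_eq_one.mpr ⟨h2i, h2f⟩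
  have hdf : 2 * d < f :=
    two_mul_lt_of_dvd_of_lt_of_odd (Nat.gcd_dvd_right i f) ((Nat.gcd_le_left f hi).trans_lt hif) hf
  have hlt : q ^ (2 * d) < m := (Nat.pow_lt_pow_right hq hdf).trans (Nat.lt_succ_self _)
  have hone : 1 < q ^ (2 * d) :=
    Nat.one_lt_pow (by have := Nat.gcd_pos_of_pos_left f hi; omega) (by omega)
  exact hone.ne' (h2d.eq_of_lt_of_lt hlt (by omega))

/-- Existence of a regular character (proof of Corollary 5.4.3): for `K` a finite
field with `q^{2f}` elements (`q ≥ 2`, `f` odd), there is a character `θ` of `K^×`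
with `θ^{q^f + 1} = 1` and `θ^{q^{2i}} ≠ θ` for all `1 ≤ i ≤ f - 1`. -/
theorem stmt_10 (q f : ℕ) (hq : 2 ≤ q) (hf : Odd f)
    (K : Type*) [Field K] [Fintype K] (hK : Fintype.card K = q ^ (2 * f)) :
    ∃ θ : Kˣ →* ℂˣ, θ ^ (q ^ f + 1) = 1 ∧
      ∀ i : ℕ, 1 ≤ i → i ≤ f - 1 → ∃ x : Kˣ, θ (x ^ q ^ (2 * i)) ≠ θ x := by
  set m := q ^ f + 1
  obtain ⟨g, hg⟩ := IsCyclic.exists_generator (α := Kˣ)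
  have hm : m ≠ 0 := by positivity
  obtain ⟨ζ, hζ⟩ : ∃ ζ : ℂˣ, IsPrimitiveRoot ζ m :=
    ⟨_, (Complex.isPrimitiveRoot_exp m hm).isUnit_unit hm⟩
  have hdvd : orderOf ζ ∣ orderOf g := by
    rw [← hζ.eq_orderOf, orderOf_eq_card_of_forall_mem_zpowers hg, Nat.card_units,
      Nat.card_eq_fintype_card, hK]
    exact Nat.pow_add_one_dvd_pow_two_mul_sub_one q f
  set θ := monoidHomOfForallMemZpowers hg hdvd
  have hθg : θ g = ζ := monoidHomOfForallMemZpowers_apply_gen hg hdvd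
  refine ⟨θ, ?_, fun i hi hif ↦ ⟨g, fun h ↦ ?_⟩⟩
  · rw [MonoidHom.eq_iff_eq_on_generator hg, MonoidHom.pow_apply, hθg, hζ.pow_eq_one,
      MonoidHom.one_apply]
  · rw [map_pow, hθg] at h
    have hmod := pow_eq_pow_iff_modEq.mp (h.trans (pow_one ζ).symm)
    rw [← hζ.eq_orderOf] at hmod
    exact Nat.not_pow_two_mul_modEq_one hq hf hi (by omega) hmod
end

section
/- Let G be a group and γ : G → G a group automorphism with γ ∘ γ = id. Let U and V be subgroups of G such that γ(U) = U and γ(V) = V, and every element of U ∩ V has odd finite order. If u ∈ U and v ∈ V satisfy γ(u·v) = u·v, then there exists d ∈ U ∩ V such that γ(u·d) = u·d and γ(d⁻¹·v) = d⁻¹·v; in particular u·v = (u·d)·(d⁻¹·v) is a product of a γ-fixed element of U and a γ-fixed element of V. -/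
/-!
With `w = γ(u)⁻¹ u`, both `γ(u d) = u d` and `γ(d⁻¹ v) = d⁻¹ v` amount to `γ d = w d`.
The cocycle `w` lies in `U ∩ V` (it also equals `γ(v) v⁻¹`) and satisfies `γ w = w⁻¹`;
if `w ^ (2k+1) = 1`, then `d = w ^ k` works, since `γ d = w⁻ᵏ = w ^ (k+1) = w d`.
-/

section

variable {G : Type*} [Group G]

theorem inv_pow_eq_mul_pow_of_pow_two_mul_add_one_eq_one {w : G} {k : ℕ}
    (h : w ^ (2 * k + 1) = 1) : (w ^ k)⁻¹ = w * w ^ k := by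
  rw [inv_eq_iff_mul_eq_one, ← pow_succ', ← pow_add, ← h]
  ring_nf

variable (γ : G →* G)

theorem MonoidHom.map_mul_eq_self_iff (u d : G) :
    γ (u * d) = u * d ↔ γ d = (γ u)⁻¹ * u * d := by
  rw [map_mul, mul_assoc, eq_inv_mul_iff_mul_eq]

theorem MonoidHom.map_inv_mul_eq_self_iff {x : G} (hx : γ x = x) (y : G) :
    γ (y⁻¹ * x) = y⁻¹ * x ↔ γ y = y := by
  rw [map_mul, map_inv, hx, mul_left_inj, inv_inj]

theorem MonoidHom.inv_map_mul_eq_map_mul_inv {u v : G} (h : γ (u * v) = u * v) :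
    (γ u)⁻¹ * u = γ v * v⁻¹ := by
  rw [map_mul] at h
  rw [inv_mul_eq_iff_eq_mul, ← mul_assoc, h, mul_inv_cancel_right]

theorem MonoidHom.map_inv_mul_self_of_involutive (hγ2 : ∀ g : G, γ (γ g) = g) (u : G) :
    γ ((γ u)⁻¹ * u) = ((γ u)⁻¹ * u)⁻¹ := by
  rw [map_mul, map_inv, hγ2, mul_inv_rev, inv_inv]

end

/-- Constructive form of Lemma 3.2.2: a `γ`-fixed product `u·v` with `u ∈ U`, `v ∈ V`
can be refactored as a product of a `γ`-fixed element of `U` and a `γ`-fixed element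
of `V`, by adjusting with some `d ∈ U ∩ V`. -/
theorem stmt_14 {G : Type*} [Group G] (γ : G →* G) (hγ2 : ∀ g : G, γ (γ g) = g)
    (U V : Subgroup G)
    (hU : ∀ g : G, g ∈ U ↔ γ g ∈ U) (hV : ∀ g : G, g ∈ V ↔ γ g ∈ V)
    (hodd : ∀ g : G, g ∈ U → g ∈ V → ∃ n : ℕ, Odd n ∧ g ^ n = 1)
    (u v : G) (hu : u ∈ U) (hv : v ∈ V) (hfix : γ (u * v) = u * v) :
    ∃ d : G, d ∈ U ∧ d ∈ V ∧ γ (u * d) = u * d ∧ γ (d⁻¹ * v) = d⁻¹ * v := by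
  set w := (γ u)⁻¹ * u with hw
  have hwU : w ∈ U := U.mul_mem (U.inv_mem ((hU u).mp hu)) hu
  have hwV : w ∈ V := by
    rw [hw, γ.inv_map_mul_eq_map_mul_inv hfix]
    exact V.mul_mem ((hV v).mp hv) (V.inv_mem hv)
  obtain ⟨_, ⟨k, rfl⟩, hwn⟩ := hodd w hwU hwV
  have hd : γ (w ^ k) = w * w ^ k := by
    rw [map_pow, hw, γ.map_inv_mul_self_of_involutive hγ2, inv_pow,
      inv_pow_eq_mul_pow_of_pow_two_mul_add_one_eq_one hwn]
  have hud : γ (u * w ^ k) = u * w ^ k := (γ.map_mul_eq_self_iff u _).2 hd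
  refine ⟨w ^ k, U.pow_mem hwU k, V.pow_mem hwV k, hud, ?_⟩
  have hsplit : (w ^ k)⁻¹ * v = (u * w ^ k)⁻¹ * (u * v) := by group
  rw [hsplit]
  exact (γ.map_inv_mul_eq_self_iff hfix _).2 hud
end
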